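/- arXiv:2412.18075 — 5 statements merged into one kernel-verified Lean document; each statement's English description precedes it below -/
import Mathlib

section
/- Let G be a group with lower central series (G_k). If a ∈ G_u and b ∈ G_v, then [a, b⁻¹] ≡ [a,b]⁻¹ modulo G_{u+2v}, i.e., [a,b] · [a, b⁻¹] ∈ G_{u+2v}. -/
open Subgroup
open scoped commutatorElement

private lemma lcs_succ_eq (G : Type*) [Group G] (k : ℕ) :
    (⊤ : Subgroup G).lowerCentralSeries (k + 1) = ⁅(⊤ : Subgroup G).lowerCentralSeries k, (⊤ : Subgroup G)⁆ := rfl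

private lemma lcs_comm_le (G : Type*) [Group G] :
    ∀ m n : ℕ, ⁅(⊤ : Subgroup G).lowerCentralSeries n, (⊤ : Subgroup G).lowerCentralSeries m⁆ ≤
      (⊤ : Subgroup G).lowerCentralSeries (n + m + 1) := by
  intro m
  induction m with
  | zero =>
    intro n
    rw [Subgroup.lowerCentralSeries_zero]
    exact le_of_eq (lcs_succ_eq G n).symm
  | succ m ih =>
    intro n
    set N := (⊤ : Subgroup G).lowerCentralSeries (n + (m + 1) + 1) with hN
    have hnorm : N.Normal := inferInstance
    set f := QuotientGroup.mk' N with hf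
    have key : ∀ X : Subgroup G, X ≤ N → Subgroup.map f X = ⊥ := by
      intro X hX
      rw [Subgroup.map_eq_bot_iff, QuotientGroup.ker_mk']
      exact hX
    have h1 : ⁅⁅Subgroup.map f ⊤, Subgroup.map f ((⊤ : Subgroup G).lowerCentralSeries n)⁆,
        Subgroup.map f ((⊤ : Subgroup G).lowerCentralSeries m)⁆ = ⊥ := by
      rw [← Subgroup.map_commutator, ← Subgroup.map_commutator]
      apply key
      have e : ⁅(⊤ : Subgroup G), (⊤ : Subgroup G).lowerCentralSeries n⁆ = (⊤ : Subgroup G).lowerCentralSeries (n + 1) := by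
        rw [Subgroup.commutator_comm, ← lcs_succ_eq]
      rw [e]
      have := ih (n + 1)
      have heq : n + 1 + m + 1 = n + (m + 1) + 1 := by omega
      rwa [heq] at this
    have h2 : ⁅⁅Subgroup.map f ((⊤ : Subgroup G).lowerCentralSeries n),
        Subgroup.map f ((⊤ : Subgroup G).lowerCentralSeries m)⁆, Subgroup.map f ⊤⁆ = ⊥ := by
      rw [← Subgroup.map_commutator, ← Subgroup.map_commutator]
      apply key
      calc ⁅⁅(⊤ : Subgroup G).lowerCentralSeries n, (⊤ : Subgroup G).lowerCentralSeries m⁆, (⊤ : Subgroup G)⁆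
          ≤ ⁅(⊤ : Subgroup G).lowerCentralSeries (n + m + 1), (⊤ : Subgroup G)⁆ :=
            Subgroup.commutator_mono (ih n) le_rfl
        _ = (⊤ : Subgroup G).lowerCentralSeries (n + m + 1 + 1) := (lcs_succ_eq G _).symm
        _ = N := by rw [hN]; congr 1
    have h3 := Subgroup.commutator_commutator_eq_bot_of_rotate h1 h2
    have goal' : ⁅(⊤ : Subgroup G).lowerCentralSeries n, (⊤ : Subgroup G).lowerCentralSeries (m + 1)⁆ ≤ N := by
      rw [← QuotientGroup.ker_mk' N, ← Subgroup.map_eq_bot_iff,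
        Subgroup.map_commutator, lcs_succ_eq, Subgroup.map_commutator,
        Subgroup.commutator_comm]
      exact h3
    exact goal'

private lemma lcs_comm_mem {G : Type*} [Group G] {m n : ℕ} {g h : G}
    (hg : g ∈ (⊤ : Subgroup G).lowerCentralSeries n) (hh : h ∈ (⊤ : Subgroup G).lowerCentralSeries m) :
    ⁅g, h⁆ ∈ (⊤ : Subgroup G).lowerCentralSeries (n + m + 1) :=
  lcs_comm_le G m n (Subgroup.commutator_mem_commutator hg hh)

/-- The commutator `[x,y] = x⁻¹y⁻¹xy`. -/
def pcomm {G : Type*} [Group G] (x y : G) : G := x⁻¹ * y⁻¹ * x * y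

/-- The lower central series indexed as in the paper: `G₁ = G`, `G_{k+1} = [G_k, G]`. -/
def lcs (G : Type*) [Group G] (k : ℕ) : Subgroup G := (⊤ : Subgroup G).lowerCentralSeries (k - 1)

theorem commutator_inv_mod_lcs {G : Type*} [Group G] (u v : ℕ) (a b : G)
    (ha : a ∈ lcs G u) (hb : b ∈ lcs G v) :
    pcomm a b * pcomm a b⁻¹ ∈ lcs G (u + 2 * v) := by
  have ha' : a⁻¹ ∈ (⊤ : Subgroup G).lowerCentralSeries (u - 1) := inv_mem ha
  have hb' : b⁻¹ ∈ (⊤ : Subgroup G).lowerCentralSeries (v - 1) := inv_mem hb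
  have hc : ⁅a⁻¹, b⁻¹⁆ ∈ (⊤ : Subgroup G).lowerCentralSeries ((u - 1) + (v - 1) + 1) :=
    lcs_comm_mem ha' hb'
  have hfin : ⁅⁅a⁻¹, b⁻¹⁆, b⁆ ∈
      (⊤ : Subgroup G).lowerCentralSeries (((u - 1) + (v - 1) + 1) + (v - 1) + 1) :=
    lcs_comm_mem hc hb
  have heq : pcomm a b * pcomm a b⁻¹ = ⁅⁅a⁻¹, b⁻¹⁆, b⁆ := by
    simp only [pcomm, commutatorElement_def]
    group
  rw [heq]
  unfold lcs
  exact Subgroup.lowerCentralSeries_antitone _ (by omega) hfin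
end

section
/- For integers p, q, e, the equation e + p·q = −2αβ + p·β + q·α has a solution in integers α, β if and only if p is odd, or q is odd, or e is even. -/
/-!
If `p = 2k + 1` is odd, taking `α = k` turns the right-hand side into `β + q k`, which is linear in
`β` with coefficient `1`, so `β` can be solved for; `q` odd is symmetric. If `p` and `q` are both
even, every term except `e` is even, so `e` must be even, and conversely an even `e` is reached with
`p - 2α = 2`.
-/

def LkEquationSolvable (p q e : ℤ) : Prop :=
  ∃ α β : ℤ, e + p * q = -2 * α * β + p * β + q * α

theorem LkEquationSolvable.swap {p q e : ℤ} (h : LkEquationSolvable p q e) :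
    LkEquationSolvable q p e := by
  obtain ⟨α, β, h⟩ := h
  exact ⟨β, α, by linear_combination h⟩

theorem lkEquationSolvable_of_odd_left {p : ℤ} (q e : ℤ) (hp : Odd p) :
    LkEquationSolvable p q e := by
  obtain ⟨k, rfl⟩ := hp
  exact ⟨k, e + (2 * k + 1) * q - q * k, by ring⟩

theorem lkEquationSolvable_of_even {p q e : ℤ} (hp : Even p) (hq : Even q) (he : Even e) :
    LkEquationSolvable p q e := by
  obtain ⟨a, rfl⟩ := hp
  obtain ⟨b, rfl⟩ := hq
  obtain ⟨c, rfl⟩ := he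
  exact ⟨a - 1, c + a * b + b, by ring⟩

theorem LkEquationSolvable.even_of_even {p q e : ℤ} (h : LkEquationSolvable p q e)
    (hp : Even p) (hq : Even q) : Even e := by
  obtain ⟨α, β, h⟩ := h
  obtain ⟨a, rfl⟩ := hp
  obtain ⟨b, rfl⟩ := hq
  exact ⟨-α * β + a * β + b * α - 2 * a * b, by linear_combination h⟩

theorem lk_two_nh_two_criterion (p q e : ℤ) :
    (∃ α β : ℤ, e + p * q = -2 * α * β + p * β + q * α) ↔
      (Odd p ∨ Odd q ∨ Even e) := by
  change LkEquationSolvable p q e ↔ _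
  constructor
  · intro h
    rcases Int.even_or_odd p with hp | hp
    · rcases Int.even_or_odd q with hq | hq
      · exact Or.inr (Or.inr (h.even_of_even hp hq))
      · exact Or.inr (Or.inl hq)
    · exact Or.inl hp
  · rintro (hp | hq | he)
    · exact lkEquationSolvable_of_odd_left q e hp
    · exact (lkEquationSolvable_of_odd_left p e hq).swap
    · rcases Int.even_or_odd p with hp | hp
      · rcases Int.even_or_odd q with hq | hq
        · exact lkEquationSolvable_of_even hp hq he
        · exact (lkEquationSolvable_of_odd_left p e hq).swap
      · exact lkEquationSolvable_of_odd_left q e hp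
end

section
/- For integers p, q, c, d, e, there exist integers α, β, x, y with e + 2αβ + p·q − α·q − β·p = x·c + y·d if and only if at least one of p, q, c, d is odd, or e is even. -/
/-! Writing the left-hand side as `e + p * q - α * q + β * (2 * α - p)`, the equation is solvable as
soon as, for some `α`, the number `2 * α - p` divides `e + p * q - α * q` modulo `c` (or, symmetrically,
`2 * β - q` does so modulo `d`). The choice `2 * α - p = 1` works for odd `p`, `2 * α - p = 1 + (p + 1) * c`
for odd `c`, and `2 * α - p = 2` when `p`, `q` and `e` are even. Conversely, if `p`, `q`, `c`, `d` are all
even, every term of the equation except `e` is even. -/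

namespace LkTwoCriterion

def Solvable (p q c d e : ℤ) : Prop :=
  ∃ α β x y : ℤ, e + 2 * α * β + p * q - α * q - β * p = x * c + y * d

variable {p q c d e : ℤ}

theorem Solvable.swap (h : Solvable p q c d e) : Solvable q p d c e := by
  obtain ⟨α, β, x, y, h⟩ := h
  exact ⟨β, α, y, x, by linear_combination h⟩

theorem Solvable.of_dvd (α k : ℤ) (h : 2 * α - p ∣ e + p * q - α * q + k * c) :
    Solvable p q c d e := by
  obtain ⟨t, ht⟩ := h
  exact ⟨α, -t, -k, 0, by linear_combination ht⟩

theorem Solvable.of_odd_p (hp : Odd p) : Solvable p q c d e := by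
  obtain ⟨m, rfl⟩ := hp
  exact .of_dvd (m + 1) 0 ⟨e + (2 * m + 1) * q - (m + 1) * q, by ring⟩

theorem Solvable.of_odd_c (hc : Odd c) : Solvable p q c d e := by
  obtain ⟨m, rfl⟩ := hc
  set α := (p + 1) * (m + 1)
  exact .of_dvd α ((p + 1) * (e + p * q - α * q)) ⟨e + p * q - α * q, by ring⟩

theorem Solvable.of_even (hp : Even p) (hq : Even q) (he : Even e) : Solvable p q c d e := by
  obtain ⟨a, rfl⟩ := hp
  obtain ⟨b, rfl⟩ := hq
  obtain ⟨n, rfl⟩ := he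
  exact .of_dvd (a + 1) 0 ⟨n + a * b - b, by ring⟩

theorem Solvable.even_e (h : Solvable p q c d e) (hp : Even p) (hq : Even q) (hc : Even c)
    (hd : Even d) : Even e := by
  obtain ⟨α, β, x, y, h⟩ := h
  have he : e = x * c + y * d + α * q + β * p - p * q - 2 * (α * β) := by linear_combination h
  rw [he]
  simp [parity_simps, hp, hq, hc, hd]

end LkTwoCriterion

theorem lk_two_nh_four_criterion (p q c d e : ℤ) :
    (∃ α β x y : ℤ, e + 2 * α * β + p * q - α * q - β * p = x * c + y * d) ↔
      (Odd p ∨ Odd q ∨ Odd c ∨ Odd d ∨ Even e) := by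
  change LkTwoCriterion.Solvable p q c d e ↔ _
  constructor
  · intro h
    by_contra! hnone
    simp only [Int.not_odd_iff_even, Int.not_even_iff_odd] at hnone
    obtain ⟨hp, hq, hc, hd, he⟩ := hnone
    exact Int.not_even_iff_odd.2 he (h.even_e hp hq hc hd)
  · rintro (hp | hq | hc | hd | he)
    · exact .of_odd_p hp
    · exact .swap (.of_odd_p hq)
    · exact .of_odd_c hc
    · exact .swap (.of_odd_c hd)
    · rcases p.even_or_odd with hp | hp
      · rcases q.even_or_odd with hq | hq
        · exact .of_even hp hq he
        · exact .swap (.of_odd_p hq)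
      · exact .of_odd_p hp
end

section
/- Let n ≥ 5 and let w : Fin n → Fin n → ℕ be a symmetric weight function with w v v = 0 for all v, such that for every 4-element subset S of Fin n, the sum of w over all unordered pairs of distinct vertices in S is at least 3. Then there exists a vertex v with ∑_{u ≠ v} w v u ≥ ⌈(2n−4)/3⌉. -/
open Finset


lemma sum_four_aux {n : ℕ} (f : Fin n → ℕ) {a b c d : Fin n}
    (hab : a ≠ b) (hac : a ≠ c) (had : a ≠ d) (hbc : b ≠ c) (hbd : b ≠ d) (hcd : c ≠ d) :
    ∑ u ∈ ({a, b, c, d} : Finset (Fin n)), f u = f a + f b + f c + f d := by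
  rw [show ({a,b,c,d} : Finset (Fin n)) = insert a (insert b (insert c {d})) from rfl,
      Finset.sum_insert (by simp [hab, hac, had]),
      Finset.sum_insert (by simp [hbc, hbd]),
      Finset.sum_insert (by simp [hcd]), Finset.sum_singleton]
  ring

lemma double_sum_eq {n : ℕ} (w : Fin n → Fin n → ℕ)
    (hsymm : ∀ u v, w u v = w v u) (hdiag : ∀ v, w v v = 0) (S : Finset (Fin n)) :
    ∑ u ∈ S, ∑ v ∈ S, w u v = 2 * ∑ u ∈ S, ∑ v ∈ S.filter (fun v => u < v), w u v := by
  have step1 : ∀ u ∈ S, ∑ v ∈ S, w u v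
      = ∑ v ∈ S.filter (fun v => u < v), w u v + ∑ v ∈ S.filter (fun v => v < u), w u v := by
    intro u hu
    rw [← Finset.sum_filter_add_sum_filter_not S (fun v => u < v)]
    congr 1
    have hins : S.filter (fun v => ¬ u < v) = insert u (S.filter (fun v => v < u)) := by
      ext x
      simp only [mem_filter, mem_insert]
      constructor
      · rintro ⟨hx, hlt⟩
        rcases lt_trichotomy x u with h | h | h
        · exact Or.inr ⟨hx, h⟩
        · exact Or.inl h
        · exact absurd h hlt
      · rintro (rfl | ⟨hx, h⟩)
        · exact ⟨hu, lt_irrefl _⟩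
        · exact ⟨hx, not_lt.mpr h.le⟩
    rw [hins, Finset.sum_insert (by simp), hdiag u, zero_add]
  rw [Finset.sum_congr rfl step1, Finset.sum_add_distrib]
  have swap : ∑ u ∈ S, ∑ v ∈ S.filter (fun v => v < u), w u v
      = ∑ u ∈ S, ∑ v ∈ S.filter (fun v => u < v), w u v := by
    rw [Finset.sum_comm' (t := fun u => S.filter (fun v => v < u))
        (t' := S) (s' := fun y => S.filter (fun x => y < x))
        (by intro x y; simp only [mem_filter]; tauto)]
    exact Finset.sum_congr rfl fun y _ => Finset.sum_congr rfl fun x _ => hsymm x y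
  rw [swap]; ring

lemma four_bound {n : ℕ} (w : Fin n → Fin n → ℕ)
    (hsymm : ∀ u v, w u v = w v u) (hdiag : ∀ v, w v v = 0)
    (h4 : ∀ S : Finset (Fin n), S.card = 4 →
      3 ≤ ∑ u ∈ S, ∑ v ∈ S.filter (fun v => u < v), w u v)
    {a b c d : Fin n}
    (hab : a ≠ b) (hac : a ≠ c) (had : a ≠ d) (hbc : b ≠ c) (hbd : b ≠ d) (hcd : c ≠ d) :
    3 ≤ w a b + w a c + w a d + w b c + w b d + w c d := by
  have hcard : ({a,b,c,d} : Finset (Fin n)).card = 4 := by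
    rw [show ({a,b,c,d} : Finset (Fin n)) = insert a (insert b (insert c {d})) from rfl,
        card_insert_of_notMem (by simp [hab, hac, had]),
        card_insert_of_notMem (by simp [hbc, hbd]),
        card_insert_of_notMem (by simp [hcd]), card_singleton]
  have h := h4 _ hcard
  have hd2 := double_sum_eq w hsymm hdiag {a,b,c,d}
  rw [sum_four_aux _ hab hac had hbc hbd hcd] at hd2
  rw [sum_four_aux _ hab hac had hbc hbd hcd, sum_four_aux _ hab hac had hbc hbd hcd,
      sum_four_aux _ hab hac had hbc hbd hcd, sum_four_aux _ hab hac had hbc hbd hcd] at hd2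
  rw [hdiag a, hdiag b, hdiag c, hdiag d, hsymm b a, hsymm c a, hsymm d a,
      hsymm c b, hsymm d b, hsymm d c] at hd2
  omega

open Finset in
theorem exists_vertex_of_large_degree (n : ℕ) (hn : 5 ≤ n)
    (w : Fin n → Fin n → ℕ)
    (hsymm : ∀ u v : Fin n, w u v = w v u)
    (hdiag : ∀ v : Fin n, w v v = 0)
    (h4 : ∀ S : Finset (Fin n), S.card = 4 →
      3 ≤ ∑ u ∈ S, ∑ v ∈ S.filter (fun v => u < v), w u v) :
    ∃ v : Fin n, (2 * n - 4 + 2) / 3 ≤ ∑ u ∈ univ.filter (fun u => u ≠ v), w v u := by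
  have degeq : ∀ v : Fin n, ∑ u ∈ univ.filter (fun u => u ≠ v), w v u = ∑ u : Fin n, w v u := by
    intro v
    rw [Finset.sum_filter]
    refine Finset.sum_congr rfl fun u _ => ?_
    by_cases h : u = v
    · subst h; simp [hdiag]
    · simp [h]
  have degsub : ∀ (v : Fin n) (T : Finset (Fin n)), ∑ u ∈ T, w v u ≤ ∑ u : Fin n, w v u :=
    fun v T => Finset.sum_le_sum_of_subset (subset_univ T)
  by_cases hz : ∃ a b : Fin n, a ≠ b ∧ w a b = 0
  · obtain ⟨a, b, hab, hab0⟩ := hz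
    by_cases ht : ∃ c, c ≠ a ∧ c ≠ b ∧ w a c = 0 ∧ w b c = 0
    · -- zero triangle case
      obtain ⟨c, hca, hcb, hac0, hbc0⟩ := ht
      have key : ∀ d, d ≠ a → d ≠ b → d ≠ c → 3 ≤ w a d + w b d + w c d := by
        intro d hda hdb hdc
        have h6 := four_bound w hsymm hdiag h4 hab (Ne.symm hca) (Ne.symm hda)
          (Ne.symm hcb) (Ne.symm hdb) (Ne.symm hdc)
        omega
      set T := univ \ ({a, b, c} : Finset (Fin n)) with hT
      have hTcard : T.card = n - 3 := by
        rw [hT, card_sdiff_of_subset (subset_univ _), card_univ, Fintype.card_fin]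
        congr 1
        rw [show ({a,b,c} : Finset (Fin n)) = insert a (insert b {c}) from rfl,
            card_insert_of_notMem (by simp [hab, Ne.symm hca]),
            card_insert_of_notMem (by simp [Ne.symm hcb]), card_singleton]
      have hsum : 3 * (n - 3) ≤ ∑ d ∈ T, (w a d + w b d + w c d) := by
        have := Finset.card_nsmul_le_sum T (fun d => w a d + w b d + w c d) 3 (by
          intro d hd
          simp only [hT, mem_sdiff, mem_univ, mem_insert, mem_singleton, true_and] at hd
          push_neg at hd
          exact key d hd.1 hd.2.1 hd.2.2)
        rw [hTcard] at this
        simpa [mul_comm] using this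
      rw [Finset.sum_add_distrib, Finset.sum_add_distrib] at hsum
      have ha' := degsub a T
      have hb' := degsub b T
      have hc' := degsub c T
      by_contra hcon
      push_neg at hcon
      have h1 := hcon a; have h2 := hcon b; have h3 := hcon c
      rw [degeq a] at h1; rw [degeq b] at h2; rw [degeq c] at h3
      omega
    · -- no zero triangle
      push_neg at ht
      have hf : ∀ c, c ≠ a → c ≠ b → 1 ≤ w a c + w b c := by
        intro c h1 h2
        have := ht c h1 h2
        omega
      by_cases hda : (2 * n - 4 + 2) / 3 ≤ ∑ u ∈ univ.filter (fun u => u ≠ a), w a u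
      · exact ⟨a, hda⟩
      by_cases hdb : (2 * n - 4 + 2) / 3 ≤ ∑ u ∈ univ.filter (fun u => u ≠ b), w b u
      · exact ⟨b, hdb⟩
      push_neg at hda hdb
      rw [degeq a] at hda; rw [degeq b] at hdb
      set R := univ \ ({a, b} : Finset (Fin n)) with hR
      have hRcard : R.card = n - 2 := by
        rw [hR, card_sdiff_of_subset (subset_univ _), card_univ, Fintype.card_fin]
        congr 1
        rw [show ({a,b} : Finset (Fin n)) = insert a {b} from rfl,
            card_insert_of_notMem (by simp [hab]), card_singleton]
      have hmemR : ∀ x ∈ R, x ≠ a ∧ x ≠ b := by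
        intro x hx
        simp only [hR, mem_sdiff, mem_univ, mem_insert, mem_singleton, true_and] at hx
        push_neg at hx
        exact hx
      have hRsum : ∑ x ∈ R, (w a x + w b x) ≤ (∑ u : Fin n, w a u) + ∑ u : Fin n, w b u := by
        rw [Finset.sum_add_distrib]
        exact Nat.add_le_add (degsub a R) (degsub b R)
      set B := R.filter (fun x => w a x + w b x = 1) with hB
      have hBsub : B ⊆ R := filter_subset _ _
      have hBcard : B.card ≤ n - 2 := hRcard ▸ card_le_card hBsub
      have hBlow : B.card + 2 * (n - 2 - B.card) ≤ ∑ x ∈ R, (w a x + w b x) := by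
        rw [← Finset.sum_sdiff hBsub]
        have h1 : ∑ x ∈ B, (w a x + w b x) = B.card := by
          rw [Finset.sum_congr rfl (fun x hx => (mem_filter.mp hx).2)]
          simp [mul_comm]
          rfl
        have h2 : 2 * (n - 2 - B.card) ≤ ∑ x ∈ R \ B, (w a x + w b x) := by
          have := Finset.card_nsmul_le_sum (R \ B) (fun x => w a x + w b x) 2 (by
            intro x hx
            rw [mem_sdiff] at hx
            obtain ⟨hxR, hxB⟩ := hx
            have h1' := hf x (hmemR x hxR).1 (hmemR x hxR).2
            have : w a x + w b x ≠ 1 := fun he => hxB (mem_filter.mpr ⟨hxR, he⟩)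
            show 2 ≤ w a x + w b x
            omega)
          rw [card_sdiff_of_subset hBsub, hRcard] at this
          simpa [mul_comm] using this
        omega
      have hBpos : 0 < B.card := by omega
      obtain ⟨c, hc⟩ := card_pos.mp hBpos
      have hcR := hBsub hc
      obtain ⟨hca, hcb⟩ := hmemR c hcR
      have hc1 : w a c + w b c = 1 := (mem_filter.mp hc).2
      have key2 : ∀ d ∈ B.erase c, 1 ≤ w c d := by
        intro d hd
        obtain ⟨hdc, hdB⟩ := mem_erase.mp hd
        obtain ⟨hda', hdb'⟩ := hmemR d (hBsub hdB)
        have hd1 : w a d + w b d = 1 := (mem_filter.mp hdB).2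
        have h6 := four_bound w hsymm hdiag h4 hab (Ne.symm hca) (Ne.symm hda')
          (Ne.symm hcb) (Ne.symm hdb') (Ne.symm hdc)
        omega
      have hanB : a ∉ insert b (B.erase c) := by
        simp only [mem_insert, mem_erase]
        push_neg
        exact ⟨hab, fun _ hB' => (hmemR a (hBsub hB')).1 rfl⟩
      have hbnB : b ∉ B.erase c := fun hB' => (hmemR b (hBsub (mem_erase.mp hB').2)).2 rfl
      have hTsum : ∑ u ∈ insert a (insert b (B.erase c)), w c u
          ≤ ∑ u : Fin n, w c u := degsub c _
      rw [Finset.sum_insert hanB, Finset.sum_insert hbnB] at hTsum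
      have herase : B.card - 1 ≤ ∑ u ∈ B.erase c, w c u := by
        have := Finset.card_nsmul_le_sum (B.erase c) (fun d => w c d) 1 key2
        rwa [card_erase_of_mem hc, smul_eq_mul, mul_one] at this
      have hcab : w c a + w c b = 1 := by rw [hsymm c a, hsymm c b]; exact hc1
      refine ⟨c, ?_⟩
      rw [degeq c]
      omega
  · -- all off-diagonal weights positive
    push_neg at hz
    obtain ⟨v, -⟩ : ∃ v : Fin n, True := ⟨⟨0, by omega⟩, trivial⟩
    refine ⟨v, ?_⟩
    have hcard : (univ.filter (fun u => u ≠ v)).card = n - 1 := by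
      rw [Finset.filter_ne', card_erase_of_mem (mem_univ _), card_univ, Fintype.card_fin]
    have := Finset.card_nsmul_le_sum (univ.filter (fun u => u ≠ v))
      (fun u => w v u) 1 (by
        intro u hu
        have hne : u ≠ v := (mem_filter.mp hu).2
        have := hz v u (Ne.symm hne)
        show 1 ≤ w v u
        omega)
    rw [hcard, smul_eq_mul, mul_one] at this
    omega
end

section
/- Let n ≥ 4 and let w : Fin n → Fin n → ℕ be a symmetric weight function with w v v = 0 for all v, such that for every 4-element subset S of Fin n, the sum of w over all unordered pairs of distinct vertices in S is at least 3. Then the total weight, i.e., the sum of w over all unordered pairs of distinct vertices of Fin n, is at least ⌈n(n−2)/3⌉. -/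
/-!
Work with the ordered double sum `∑ a ∈ V, ∑ b ∈ V, w a b`, which counts every pair twice, so
the hypothesis says that it is at least 6 on every 4-set. The bound `⌈m(m-2)/3⌉` grows by
`⌊2m/3⌋` from `m` to `m + 1` vertices, so by induction it suffices to find, among `m + 1 ≥ 5`
vertices, one of weighted degree at least `⌊2m/3⌋`, and to delete it.

Suppose all degrees are smaller. Fix `u` and let `Z` be the set of vertices joined to `u` by
weight 0, so `#Z > m - ⌊2m/3⌋`. If all pairs in `Z` have weight at least 2, a vertex of `Z` has
degree at least `2 (#Z - 1) ≥ ⌊2m/3⌋`. Otherwise some `x, y ∈ Z` have `w x y ≤ 1`, and the 4-sets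
`{u, x, y, t}` give `w u t + w x t + w y t ≥ 3 - w x y` for each of the `m - 2` other vertices
`t`, whence `deg u + deg x + deg y ≥ 2m - 2 > 3 (⌊2m/3⌋ - 1)`.
-/

open Finset

def totalWeightBound (m : ℕ) : ℕ := (m * (m - 2) + 2) / 3

theorem totalWeightBound_succ (m : ℕ) :
    totalWeightBound (m + 1) = totalWeightBound m + 2 * m / 3 := by
  unfold totalWeightBound
  obtain _ | _ | k := m
  · rfl
  · rfl
  rw [show k + 2 + 1 - 2 = k + 1 by omega, show k + 2 - 2 = k by omega]
  obtain ⟨j, rfl | rfl | rfl⟩ : ∃ j, k = 3 * j ∨ k = 3 * j + 1 ∨ k = 3 * j + 2 :=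
    ⟨k / 3, by omega⟩ <;>
  · ring_nf
    omega

section

variable {α : Type*} [DecidableEq α] (w : α → α → ℕ)

def weightedDegree (V : Finset α) (v : α) : ℕ := ∑ a ∈ V.erase v, w v a

theorem sum_sum_eq_sum_sum_erase_add_two_mul_weightedDegree
    (hsymm : ∀ u v, w u v = w v u) (hdiag : ∀ v, w v v = 0) {V : Finset α} {v : α}
    (hv : v ∈ V) :
    ∑ a ∈ V, ∑ b ∈ V, w a b
      = ∑ a ∈ V.erase v, ∑ b ∈ V.erase v, w a b + 2 * weightedDegree w V v := by
  have hsymm_sum : ∑ a ∈ V.erase v, w a v = weightedDegree w V v :=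
    sum_congr rfl fun a _ => hsymm a v
  conv_lhs => rw [← insert_erase hv]
  simp only [sum_insert (notMem_erase v V), hdiag, sum_add_distrib, hsymm_sum]
  unfold weightedDegree
  ring

theorem sum_sum_insert_four (hsymm : ∀ u v, w u v = w v u) (hdiag : ∀ v, w v v = 0)
    {a b c d : α} (hab : a ≠ b) (hac : a ≠ c) (had : a ≠ d) (hbc : b ≠ c) (hbd : b ≠ d)
    (hcd : c ≠ d) :
    ∑ u ∈ {a, b, c, d}, ∑ v ∈ {a, b, c, d}, w u v
      = 2 * (w a b + w a c + w a d + w b c + w b d + w c d) := by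
  simp only [sum_insert, mem_insert, mem_singleton, sum_singleton, hab, hac, had, hbc, hbd, hcd,
    or_self, not_false_eq_true, hdiag, hsymm b a, hsymm c a, hsymm d a, hsymm c b, hsymm d b,
    hsymm d c]
  ring

theorem sum_le_weightedDegree {V T : Finset α} {v : α} (hT : T ⊆ V.erase v) :
    ∑ t ∈ T, w v t ≤ weightedDegree w V v :=
  sum_le_sum_of_subset hT

theorem mul_card_le_weightedDegree {V T : Finset α} {v : α} {k : ℕ} (hT : T ⊆ V.erase v)
    (hk : ∀ t ∈ T, k ≤ w v t) : k * #T ≤ weightedDegree w V v :=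
  calc k * #T = #T • k := by rw [smul_eq_mul, mul_comm]
    _ ≤ ∑ t ∈ T, w v t := card_nsmul_le_sum T (w v) k hk
    _ ≤ weightedDegree w V v := sum_le_weightedDegree w hT

theorem card_erase_le_card_filter_add_weightedDegree (V : Finset α) (u : α) :
    #(V.erase u) ≤ #((V.erase u).filter (w u · = 0)) + weightedDegree w V u := by
  have hpos : 1 * #((V.erase u).filter (fun t => ¬ w u t = 0)) ≤ weightedDegree w V u :=
    mul_card_le_weightedDegree w (filter_subset _ _)
      fun t ht => Nat.one_le_iff_ne_zero.mpr (mem_filter.mp ht).2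
  have := card_filter_add_card_filter_not (s := V.erase u) (fun t => w u t = 0)
  omega

theorem two_mul_card_sub_four_le_weightedDegree_add (hsymm : ∀ u v, w u v = w v u)
    (hdiag : ∀ v, w v v = 0) {V : Finset α} (hV : 5 ≤ #V)
    (hquad : ∀ S ⊆ V, #S = 4 → 6 ≤ ∑ a ∈ S, ∑ b ∈ S, w a b)
    {u x y : α} (hu : u ∈ V) (hx : x ∈ V) (hy : y ∈ V) (hux : u ≠ x) (huy : u ≠ y) (hxy : x ≠ y)
    (hwux : w u x = 0) (hwuy : w u y = 0) (hwxy : w x y ≤ 1) :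
    2 * #V - 4 ≤ weightedDegree w V u + weightedDegree w V x + weightedDegree w V y := by
  set T := V \ {u, x, y}
  have hT : #T = #V - 3 := by
    rw [card_sdiff_of_subset (by simp [insert_subset_iff, hu, hx, hy]),
      card_eq_three.mpr ⟨u, x, y, hux, huy, hxy, rfl⟩]
  have hmemT : ∀ t ∈ T, t ∈ V ∧ t ≠ u ∧ t ≠ x ∧ t ≠ y := by
    intro t ht
    simpa [T, not_or] using ht
  have hthree : ∀ t ∈ T, 3 ≤ w u t + w x t + w y t + w x y := by
    intro t ht
    obtain ⟨htV, htu, htx, hty⟩ := hmemT t ht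
    have := hquad {u, x, y, t} (by simp [insert_subset_iff, hu, hx, hy, htV])
      (card_eq_four.mpr ⟨u, x, y, t, hux, huy, htu.symm, hxy, htx.symm, hty.symm, rfl⟩)
    rw [sum_sum_insert_four w hsymm hdiag hux huy htu.symm hxy htx.symm hty.symm] at this
    omega
  have hsum : #T * 3 ≤ ∑ t ∈ T, w u t + ∑ t ∈ T, w x t + ∑ t ∈ T, w y t + #T * w x y := by
    simpa [sum_add_distrib, mul_comm] using card_nsmul_le_sum T _ 3 hthree
  have hdegu : ∑ t ∈ T, w u t ≤ weightedDegree w V u :=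
    sum_le_weightedDegree w fun t ht => by simp [(hmemT t ht).1, (hmemT t ht).2.1]
  have hdegx : w x y + ∑ t ∈ T, w x t ≤ weightedDegree w V x := by
    rw [← sum_insert (by simp [T])]
    refine sum_le_weightedDegree w fun t ht => ?_
    rcases mem_insert.mp ht with rfl | ht
    · simp [hy, hxy.symm]
    · simp [(hmemT t ht).1, (hmemT t ht).2.2.1]
  have hdegy : w x y + ∑ t ∈ T, w y t ≤ weightedDegree w V y := by
    rw [hsymm, ← sum_insert (by simp [T])]
    refine sum_le_weightedDegree w fun t ht => ?_
    rcases mem_insert.mp ht with rfl | ht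
    · simp [hx, hxy]
    · simp [(hmemT t ht).1, (hmemT t ht).2.2.2]
  rcases Nat.le_one_iff_eq_zero_or_eq_one.mp hwxy with h | h <;> rw [h] at hsum hdegx hdegy <;>
    omega

theorem exists_two_mul_div_three_le_weightedDegree (hsymm : ∀ u v, w u v = w v u)
    (hdiag : ∀ v, w v v = 0) {V : Finset α} {m : ℕ} (hm : 4 ≤ m) (hV : #V = m + 1)
    (hquad : ∀ S ⊆ V, #S = 4 → 6 ≤ ∑ a ∈ S, ∑ b ∈ S, w a b) :
    ∃ v ∈ V, 2 * m / 3 ≤ weightedDegree w V v := by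
  by_contra! hsmall
  obtain ⟨u, hu⟩ : V.Nonempty := card_pos.mp (by omega)
  set Z := (V.erase u).filter (w u · = 0)
  have hZ : m ≤ #Z + weightedDegree w V u := by
    have := card_erase_le_card_filter_add_weightedDegree w V u
    rwa [card_erase_of_mem hu, hV] at this
  have hmemZ : ∀ x ∈ Z, x ≠ u ∧ x ∈ V ∧ w u x = 0 := fun x hx => by simpa [Z, and_assoc] using hx
  by_cases hheavy : ∀ x ∈ Z, ∀ y ∈ Z, x ≠ y → 2 ≤ w x y
  · obtain ⟨x, hx⟩ : Z.Nonempty := card_pos.mp (by have := hsmall u hu; omega)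
    have hdeg : 2 * #(Z.erase x) ≤ weightedDegree w V x :=
      mul_card_le_weightedDegree w
        (fun y hy => mem_erase.mpr ⟨ne_of_mem_erase hy, (hmemZ y (mem_of_mem_erase hy)).2.1⟩)
        fun y hy => hheavy x hx y (mem_of_mem_erase hy) (ne_of_mem_erase hy).symm
    have := hsmall u hu
    have := hsmall x (hmemZ x hx).2.1
    rw [card_erase_of_mem hx] at hdeg
    omega
  · push Not at hheavy
    obtain ⟨x, hx, y, hy, hxy, hwxy⟩ := hheavy
    obtain ⟨hxu, hxV, hwux⟩ := hmemZ x hx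
    obtain ⟨hyu, hyV, hwuy⟩ := hmemZ y hy
    have := two_mul_card_sub_four_le_weightedDegree_add w hsymm hdiag (by omega) hquad hu hxV hyV
      hxu.symm hyu.symm hxy hwux hwuy (by omega)
    have := hsmall u hu
    have := hsmall x hxV
    have := hsmall y hyV
    omega

theorem two_mul_totalWeightBound_le_sum_sum (hsymm : ∀ u v, w u v = w v u)
    (hdiag : ∀ v, w v v = 0) {V : Finset α} (hV : 4 ≤ #V)
    (hquad : ∀ S ⊆ V, #S = 4 → 6 ≤ ∑ a ∈ S, ∑ b ∈ S, w a b) :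
    2 * totalWeightBound #V ≤ ∑ a ∈ V, ∑ b ∈ V, w a b := by
  obtain ⟨m, hVm⟩ : ∃ m, #V = m := ⟨_, rfl⟩
  rw [hVm] at hV ⊢
  induction m, hV using Nat.le_induction generalizing V with
  | base => exact hquad V subset_rfl hVm
  | succ m hm ih =>
    obtain ⟨v, hv, hdeg⟩ := exists_two_mul_div_three_le_weightedDegree w hsymm hdiag hm hVm hquad
    have := ih (fun S hS => hquad S (hS.trans (erase_subset v V)))
      (by rw [card_erase_of_mem hv, hVm, Nat.add_sub_cancel])
    rw [sum_sum_eq_sum_sum_erase_add_two_mul_weightedDegree w hsymm hdiag hv,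
      totalWeightBound_succ]
    omega

end

theorem sum_sum_eq_two_mul_sum_sum_filter_lt {α : Type*} [LinearOrder α] (w : α → α → ℕ)
    (hsymm : ∀ u v, w u v = w v u) (hdiag : ∀ v, w v v = 0) (S : Finset α) :
    ∑ a ∈ S, ∑ b ∈ S, w a b = 2 * ∑ a ∈ S, ∑ b ∈ S.filter (a < ·), w a b := by
  have hsplit : ∀ a b, w a b = (if a < b then w a b else 0) + (if b < a then w b a else 0) := by
    intro a b
    rcases lt_trichotomy a b with h | rfl | h
    · simp [h, h.not_gt]
    · simp [hdiag]
    · simp [h, h.not_gt, hsymm a b]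
  simp_rw [sum_filter]
  calc ∑ a ∈ S, ∑ b ∈ S, w a b
      = ∑ a ∈ S, ∑ b ∈ S, (if a < b then w a b else 0)
          + ∑ a ∈ S, ∑ b ∈ S, (if b < a then w b a else 0) := by
        simp_rw [← sum_add_distrib, ← hsplit]
    _ = _ := by rw [sum_comm (f := fun a b => if b < a then w b a else 0)]; ring

open Finset in
theorem total_weight_lower_bound (n : ℕ) (hn : 4 ≤ n)
    (w : Fin n → Fin n → ℕ)
    (hsymm : ∀ u v : Fin n, w u v = w v u)
    (hdiag : ∀ v : Fin n, w v v = 0)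
    (h4 : ∀ S : Finset (Fin n), S.card = 4 →
      3 ≤ ∑ u ∈ S, ∑ v ∈ S.filter (fun v => u < v), w u v) :
    (n * (n - 2) + 2) / 3 ≤ ∑ u : Fin n, ∑ v ∈ univ.filter (fun v => u < v), w u v := by
  have hquad : ∀ S ⊆ (univ : Finset (Fin n)), #S = 4 → 6 ≤ ∑ a ∈ S, ∑ b ∈ S, w a b := by
    intro S _ hS
    have := h4 S hS
    rw [sum_sum_eq_two_mul_sum_sum_filter_lt w hsymm hdiag]
    omega
  have := two_mul_totalWeightBound_le_sum_sum w hsymm hdiag (by simpa using hn) hquad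
  rw [sum_sum_eq_two_mul_sum_sum_filter_lt w hsymm hdiag, card_univ, Fintype.card_fin] at this
  exact Nat.le_of_mul_le_mul_left this two_pos
end
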